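/- arXiv:1502.05934 — 6 statements merged into one kernel-verified Lean document; each statement's English description precedes it below -/
import Mathlib

section
/- For any sequence r_1, ..., r_T with |r_t| ≤ 1 for all t, letting C_t = Σ_{τ≤t} |r_τ| (C_0 = 0), we have Σ_{t=1}^T |r_t|/(C_{t-1} + 1) ≤ 1 + ln(1 + C_T). -/
/-!
Each term is bounded by an increment of the potential `Φ_t = log x - 1/x` at `x = C_t + 1`.
With `x = C_{t-1} + 1` and `a = |r_t|`, the term `a/x` splits as `a/(x+a)`, which is at most
`log (x+a) - log x`, plus `a (1/x - 1/(x+a))`, which is at most `1/x - 1/(x+a)` because `a ≤ 1`.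
Summing telescopes to `Φ_T - Φ_0 = log (1 + C_T) - 1/(1 + C_T) + 1`.
-/

open Finset Real

lemma sub_div_le_log_sub_log {x y : ℝ} (hx : 0 < x) (hy : 0 < y) :
    (y - x) / y ≤ log y - log x := by
  have h := one_sub_inv_le_log_of_pos (div_pos hy hx)
  rwa [inv_div, log_div hy.ne' hx.ne', ← div_self hy.ne', ← sub_div] at h

lemma div_le_log_sub_log_add_inv_sub_inv {x a : ℝ} (hx : 0 < x) (ha₀ : 0 ≤ a) (ha₁ : a ≤ 1) :
    a / x ≤ log (x + a) - log x + (x⁻¹ - (x + a)⁻¹) := by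
  have hxa : 0 < x + a := by linarith
  have hlog : a / (x + a) ≤ log (x + a) - log x := by
    simpa using sub_div_le_log_sub_log hx hxa
  have hinv : 0 ≤ x⁻¹ - (x + a)⁻¹ := sub_nonneg.2 (inv_anti₀ hx (by linarith))
  have hsplit : a / x = a / (x + a) + a * (x⁻¹ - (x + a)⁻¹) := by
    field_simp
    ring
  linarith [mul_le_of_le_one_left hinv ha₁]

theorem self_normalized_sum (T : ℕ) (r : ℕ → ℝ) (hr : ∀ t, |r t| ≤ 1) :
    ∑ t ∈ Finset.range T, |r t| / ((∑ τ ∈ Finset.range t, |r τ|) + 1)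
      ≤ 1 + Real.log (1 + ∑ τ ∈ Finset.range T, |r τ|) := by
  set C : ℕ → ℝ := fun t => ∑ τ ∈ range t, |r τ| with hC
  have hC_nonneg (t : ℕ) : 0 ≤ C t := sum_nonneg fun τ _ => abs_nonneg (r τ)
  set Φ : ℕ → ℝ := fun t => log (C t + 1) - (C t + 1)⁻¹ with hΦ
  have step (t : ℕ) : |r t| / (C t + 1) ≤ Φ (t + 1) - Φ t := by
    have hsucc : C (t + 1) + 1 = C t + 1 + |r t| := by
      simp only [hC, sum_range_succ]
      ring
    have hx : 0 < C t + 1 := by linarith [hC_nonneg t]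
    have := div_le_log_sub_log_add_inv_sub_inv hx (abs_nonneg (r t)) (hr t)
    simp only [hΦ, hsucc]
    linarith
  have hΦ_zero : Φ 0 = -1 := by simp [hΦ, hC]
  calc ∑ t ∈ range T, |r t| / (C t + 1)
      ≤ ∑ t ∈ range T, (Φ (t + 1) - Φ t) := sum_le_sum fun t _ => step t
    _ = Φ T + 1 := by rw [sum_range_sub, hΦ_zero, sub_neg_eq_add]
    _ ≤ 1 + log (1 + C T) := by
      have : 0 ≤ (1 + C T)⁻¹ := inv_nonneg.2 (by linarith [hC_nonneg T])
      simp only [hΦ, add_comm (C T)]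
      linarith
end

section
/- Suppose a prediction strategy satisfies, on every round t, Σ_i q_i · w(R_{t-1,i}, C_{t-1,i}) · r_{t,i} = 0, where r_{t,i} ∈ [-1,1], R_{t,i} = Σ_{τ≤t} r_{τ,i}, and C_{t,i} = Σ_{τ≤t} |r_{τ,i}|. Then Σ_i q_i Φ(R_{T,i}, C_{T,i}) ≤ 1 + (3/2) Σ_i q_i (1 + ln(1 + C_{T,i})). -/
/-!
`Phi` is convex on the cone `|R| ≤ C`: it is the exponential of `max R 0 ^ 2 / (3 C)`, a perspective
of a convex function. A round moves `(R, C)` to `(R + r, C + |r|)`, the convex combination with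
weights `1 - |r|, |r|` of `(R, C)` and `(R ± 1, C + 1)`. Combined with the second-difference bound
`Phi (R + 1) (C + 1) + Phi (R - 1) (C + 1) ≤ 2 Phi R C + 1 / (C + 1)` (write the two exponents as
`m ± d` and use `cosh d ≤ exp (d ^ 2 / 2)`), this gives
`Phi (R + r) (C + |r|) ≤ Phi R C + w R C * r + 3 |r| / (2 (C + 1))`.
After averaging with `q`, the balance condition cancels the linear terms, so the averaged
potential grows by at most `3/2 ∑ i, q i |r i| / (C i + 1)` per round, and these increments
telescope against `log (1 + C) - 1 / (1 + C)`.
-/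

noncomputable def Phi (R C : ℝ) : ℝ := Real.exp ((max R 0) ^ 2 / (3 * C))

noncomputable def w (R C : ℝ) : ℝ := (1 / 2) * (Phi (R + 1) (C + 1) - Phi (R - 1) (C + 1))

open Finset Real

lemma add_sq_div_add_le {x₁ x₂ y₁ y₂ : ℝ} (hy₁ : 0 ≤ y₁) (hy₂ : 0 ≤ y₂)
    (hx₁ : y₁ = 0 → x₁ = 0) (hx₂ : y₂ = 0 → x₂ = 0) :
    (x₁ + x₂) ^ 2 / (y₁ + y₂) ≤ x₁ ^ 2 / y₁ + x₂ ^ 2 / y₂ := by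
  rcases hy₁.eq_or_lt with rfl | hy₁
  · simp [hx₁ rfl]
  rcases hy₂.eq_or_lt with rfl | hy₂
  · simp [hx₂ rfl]
  simpa [Fin.sum_univ_two] using
    sq_sum_div_le_sum_sq_div univ ![x₁, x₂] (g := ![y₁, y₂])
      (by simp [Fin.forall_fin_two, hy₁, hy₂])

lemma mul_sq_div_mul (a x y : ℝ) : (a * x) ^ 2 / (a * y) = a * (x ^ 2 / y) := by
  rcases eq_or_ne a 0 with rfl | ha
  · simp
  rw [mul_pow, sq a, mul_assoc, mul_div_mul_left _ _ ha, mul_div_assoc]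

lemma convex_abs_fst_le_snd : Convex ℝ {p : ℝ × ℝ | |p.1| ≤ p.2} := by
  intro p hp q hq a b ha hb _
  calc |a * p.1 + b * q.1| ≤ a * |p.1| + b * |q.1| := by
        simpa [abs_mul, abs_of_nonneg ha, abs_of_nonneg hb] using abs_add_le (a * p.1) (b * q.1)
    _ ≤ a * p.2 + b * q.2 := by gcongr; exacts [hp, hq]

lemma convexOn_max_sq_div :
    ConvexOn ℝ {p : ℝ × ℝ | |p.1| ≤ p.2} fun p => max p.1 0 ^ 2 / p.2 := by
  refine ⟨convex_abs_fst_le_snd, fun p hp q hq a b ha hb hab => ?_⟩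
  have hvanish : ∀ {c : ℝ} {z : ℝ × ℝ}, |z.1| ≤ z.2 → c * z.2 = 0 → c * max z.1 0 = 0 := by
    intro c z hz h
    rcases mul_eq_zero.1 h with h | h
    · simp [h]
    · simp [show max z.1 0 = 0 by simp only [max_eq_right_iff]; linarith [le_abs_self z.1]]
  have hp₀ : 0 ≤ a * p.2 := mul_nonneg ha ((abs_nonneg _).trans hp)
  have hq₀ : 0 ≤ b * q.2 := mul_nonneg hb ((abs_nonneg _).trans hq)
  have hmax : max (a * p.1 + b * q.1) 0 ≤ a * max p.1 0 + b * max q.1 0 :=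
    max_le (by gcongr <;> exact le_max_left _ _) (by positivity)
  simp only [Prod.smul_fst, Prod.smul_snd, Prod.fst_add, Prod.snd_add, smul_eq_mul]
  calc max (a * p.1 + b * q.1) 0 ^ 2 / (a * p.2 + b * q.2)
      ≤ (a * max p.1 0 + b * max q.1 0) ^ 2 / (a * p.2 + b * q.2) := by
        gcongr
    _ ≤ (a * max p.1 0) ^ 2 / (a * p.2) + (b * max q.1 0) ^ 2 / (b * q.2) :=
        add_sq_div_add_le hp₀ hq₀ (hvanish hp) (hvanish hq)
    _ = a * (max p.1 0 ^ 2 / p.2) + b * (max q.1 0 ^ 2 / q.2) := by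
        rw [mul_sq_div_mul, mul_sq_div_mul]

lemma convexOn_Phi : ConvexOn ℝ {p : ℝ × ℝ | |p.1| ≤ p.2} fun p => Phi p.1 p.2 := by
  refine ⟨convex_abs_fst_le_snd, fun p hp q hq a b ha hb hab => ?_⟩
  have hexp (z : ℝ × ℝ) : Phi z.1 z.2 = exp (max z.1 0 ^ 2 / z.2 / 3) := by
    rw [Phi, div_div, mul_comm]
  simp only [hexp]
  calc exp (max (a • p + b • q).1 0 ^ 2 / (a • p + b • q).2 / 3)
      ≤ exp (a * (max p.1 0 ^ 2 / p.2 / 3) + b * (max q.1 0 ^ 2 / q.2 / 3)) := by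
        have := convexOn_max_sq_div.2 hp hq ha hb hab
        simp only [smul_eq_mul] at this
        rw [exp_le_exp]
        linarith
    _ ≤ a * exp (max p.1 0 ^ 2 / p.2 / 3) + b * exp (max q.1 0 ^ 2 / q.2 / 3) :=
        convexOn_exp.2 (Set.mem_univ _) (Set.mem_univ _) ha hb hab

lemma Phi_add_mul_le {R C e s : ℝ} (hRC : |R| ≤ C) (he : |e| ≤ 1) (hs₀ : 0 ≤ s) (hs₁ : s ≤ 1) :
    Phi (R + s * e) (C + s) ≤ (1 - s) * Phi R C + s * Phi (R + e) (C + 1) := by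
  have hRe : |R + e| ≤ C + 1 := (abs_add_le R e).trans (add_le_add hRC he)
  have hpt : (1 - s) • (R, C) + s • (R + e, C + 1) = (R + s * e, C + s) := by
    ext <;> simp only [Prod.fst_add, Prod.snd_add, Prod.smul_fst, Prod.smul_snd, smul_eq_mul] <;> ring
  simpa only [hpt, smul_eq_mul] using
    convexOn_Phi.2 (x := (R, C)) (y := (R + e, C + 1)) hRC hRe (sub_nonneg.2 hs₁) hs₀ (by ring)

lemma exp_add_add_exp_sub_le (m d : ℝ) : exp (m + d) + exp (m - d) ≤ 2 * exp (m + d ^ 2 / 2) := by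
  have hcosh := cosh_le_exp_half_sq d
  rw [cosh_eq] at hcosh
  calc exp (m + d) + exp (m - d) = exp m * (exp d + exp (-d)) := by
        rw [sub_eq_add_neg, exp_add, exp_add]; ring
    _ ≤ exp m * (2 * exp (d ^ 2 / 2)) := by gcongr; linarith
    _ = 2 * exp (m + d ^ 2 / 2) := by rw [exp_add]; ring

lemma exp_mul_one_sub_le_one (x : ℝ) : exp x * (1 - x) ≤ 1 :=
  calc exp x * (1 - x) ≤ exp x * exp (-x) := by gcongr; exact one_sub_le_exp_neg x
    _ = 1 := by rw [← exp_add, add_neg_cancel, exp_zero]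

lemma exp_add_one_sub_div_le {x k : ℝ} (hx : 0 ≤ x) (hk : 1 ≤ k) :
    exp (x + (1 - x) / (3 * k)) ≤ exp x + 1 / (2 * k) := by
  have hk' : 0 < 1 / (2 * k) := by positivity
  rcases le_or_gt 1 x with hx₁ | hx₁
  · have ht : (1 - x) / (3 * k) ≤ 0 := div_nonpos_of_nonpos_of_nonneg (by linarith) (by positivity)
    linarith [exp_le_exp.2 (show x + (1 - x) / (3 * k) ≤ x by linarith)]
  set t := (1 - x) / (3 * k) with ht
  have ht₀ : 0 ≤ t := div_nonneg (by linarith) (by positivity)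
  have ht₁ : t ≤ 1 / 3 := by rw [ht, div_le_iff₀ (by positivity)]; linarith
  have hexp_t : exp t ≤ 1 + 3 / 2 * t :=
    (exp_bound_div_one_sub_of_interval ht₀ (by linarith)).trans
      (by rw [div_le_iff₀ (by linarith)]; nlinarith)
  calc exp (x + t) = exp x * exp t := exp_add x t
    _ ≤ exp x * (1 + 3 / 2 * t) := by gcongr
    _ = exp x + exp x * (1 - x) / (2 * k) := by rw [ht]; field_simp
    _ ≤ exp x + 1 / (2 * k) := by gcongr; exact exp_mul_one_sub_le_one x

lemma exp_add_one_sq_add_exp_sub_one_sq_le {u C : ℝ} (hu : 0 ≤ u) (huC : u ≤ C) :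
    exp ((u + 1) ^ 2 / (3 * (C + 1))) + exp ((u - 1) ^ 2 / (3 * (C + 1)))
      ≤ 2 * exp (u ^ 2 / (3 * C)) + 1 / (C + 1) := by
  set x := u ^ 2 / (3 * C) with hx
  have hx₀ : 0 ≤ x := div_nonneg (sq_nonneg u) (by linarith)
  have hexponent : (u ^ 2 + 1) / (3 * (C + 1)) + (2 * u / (3 * (C + 1))) ^ 2 / 2
      ≤ x + (1 - x) / (3 * (C + 1)) := by
    rcases (hu.trans huC).eq_or_lt with rfl | hC
    · obtain rfl : u = 0 := le_antisymm huC hu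
      norm_num [hx]
    rw [← sub_nonneg]
    have hdiff : x + (1 - x) / (3 * (C + 1))
        - ((u ^ 2 + 1) / (3 * (C + 1)) + (2 * u / (3 * (C + 1))) ^ 2 / 2)
        = 2 * u ^ 2 / (9 * C * (C + 1) ^ 2) := by
      rw [hx]; field_simp; ring
    rw [hdiff]
    positivity
  calc exp ((u + 1) ^ 2 / (3 * (C + 1))) + exp ((u - 1) ^ 2 / (3 * (C + 1)))
      = exp ((u ^ 2 + 1) / (3 * (C + 1)) + 2 * u / (3 * (C + 1)))
        + exp ((u ^ 2 + 1) / (3 * (C + 1)) - 2 * u / (3 * (C + 1))) := by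
        congr 2 <;> ring
    _ ≤ 2 * exp ((u ^ 2 + 1) / (3 * (C + 1)) + (2 * u / (3 * (C + 1))) ^ 2 / 2) :=
        exp_add_add_exp_sub_le _ _
    _ ≤ 2 * (exp x + 1 / (2 * (C + 1))) := by
        gcongr
        exact (exp_le_exp.2 hexponent).trans (exp_add_one_sub_div_le hx₀ (by linarith))
    _ = 2 * exp x + 1 / (C + 1) := by rw [mul_add]; congr 1; field_simp

lemma Phi_add_one_add_Phi_sub_one_le {R C : ℝ} (hRC : max R 0 ≤ C) :
    Phi (R + 1) (C + 1) + Phi (R - 1) (C + 1) ≤ 2 * Phi R C + 1 / (C + 1) := by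
  set u := max R 0 with hu
  have hC : 0 ≤ C + 1 := by linarith [le_max_right R 0]
  have hplus : Phi (R + 1) (C + 1) ≤ exp ((u + 1) ^ 2 / (3 * (C + 1))) := by
    rw [Phi, exp_le_exp]
    gcongr
    exact max_le (by linarith [le_max_left R 0]) (by linarith [le_max_right R 0])
  have hminus : Phi (R - 1) (C + 1) ≤ exp ((u - 1) ^ 2 / (3 * (C + 1))) := by
    rw [Phi, exp_le_exp]
    refine div_le_div_of_nonneg_right ?_ (by positivity)
    rcases le_or_gt R 1 with hR | hR
    · rw [max_eq_right (by linarith)]; simpa using sq_nonneg (u - 1)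
    · rw [hu, max_eq_left (by linarith), max_eq_left (by linarith)]
  have hPhi : Phi R C = exp (u ^ 2 / (3 * C)) := rfl
  linarith [exp_add_one_sq_add_exp_sub_one_sq_le (le_max_right R 0) hRC]

lemma Phi_add_le {R C r : ℝ} (hRC : |R| ≤ C) (hr : |r| ≤ 1) :
    Phi (R + r) (C + |r|) ≤ Phi R C + w R C * r + 3 / 2 * (|r| / (C + 1)) := by
  have hC : 0 ≤ C := (abs_nonneg R).trans hRC
  have hstar := Phi_add_one_add_Phi_sub_one_le (max_le ((le_abs_self R).trans hRC) hC)
  have hslack : |r| * (1 / (C + 1)) ≤ 3 * (|r| / (C + 1)) := by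
    rw [mul_one_div]; linarith [div_nonneg (abs_nonneg r) (by linarith : 0 ≤ C + 1)]
  rcases le_total 0 r with h | h
  · have hchord := Phi_add_mul_le (e := 1) hRC (by norm_num) (abs_nonneg r) hr
    rw [abs_of_nonneg h, mul_one] at hchord
    rw [abs_of_nonneg h] at hslack ⊢
    rw [w]
    nlinarith [mul_le_mul_of_nonneg_left hstar h]
  · have hchord := Phi_add_mul_le (e := -1) hRC (by norm_num) (abs_nonneg r) hr
    rw [abs_of_nonpos h, show R + -r * -1 = R + r by ring, show R + -1 = R - 1 by ring] at hchord
    rw [abs_of_nonpos h] at hslack ⊢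
    rw [w]
    nlinarith [mul_le_mul_of_nonneg_left hstar (neg_nonneg.2 h)]

lemma sum_mul_Phi_add_le {ι : Type*} (s : Finset ι) (q R C r : ι → ℝ) (hq : ∀ i ∈ s, 0 ≤ q i)
    (hRC : ∀ i ∈ s, |R i| ≤ C i) (hr : ∀ i ∈ s, |r i| ≤ 1)
    (hbal : ∑ i ∈ s, q i * w (R i) (C i) * r i = 0) :
    ∑ i ∈ s, q i * Phi (R i + r i) (C i + |r i|)
      ≤ ∑ i ∈ s, q i * Phi (R i) (C i) + 3 / 2 * ∑ i ∈ s, q i * (|r i| / (C i + 1)) :=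
  calc ∑ i ∈ s, q i * Phi (R i + r i) (C i + |r i|)
      ≤ ∑ i ∈ s, q i * (Phi (R i) (C i) + w (R i) (C i) * r i + 3 / 2 * (|r i| / (C i + 1))) :=
        sum_le_sum fun i hi => mul_le_mul_of_nonneg_left (Phi_add_le (hRC i hi) (hr i hi)) (hq i hi)
    _ = ∑ i ∈ s, q i * Phi (R i) (C i) + ∑ i ∈ s, q i * w (R i) (C i) * r i
        + 3 / 2 * ∑ i ∈ s, q i * (|r i| / (C i + 1)) := by
        rw [mul_sum, ← sum_add_distrib, ← sum_add_distrib]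
        exact sum_congr rfl fun i _ => by ring
    _ = _ := by rw [hbal, add_zero]

lemma sum_div_sum_range_add_one_le (a : ℕ → ℝ) (ha₀ : ∀ t, 0 ≤ a t) (ha₁ : ∀ t, a t ≤ 1)
    (T : ℕ) :
    ∑ t ∈ range T, a t / (∑ τ ∈ range t, a τ + 1) ≤ 1 + log (1 + ∑ t ∈ range T, a t) := by
  set S : ℕ → ℝ := fun n => ∑ τ ∈ range n, a τ + 1 with hS
  have hS₁ (n : ℕ) : 1 ≤ S n := le_add_of_nonneg_left (sum_nonneg fun τ _ => ha₀ τ)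
  set F : ℕ → ℝ := fun n => log (S n) - (S n)⁻¹ with hF
  have hstep (t : ℕ) : a t / S t ≤ F (t + 1) - F t := by
    have hsucc : S (t + 1) = S t + a t := by simp only [hS, sum_range_succ]; ring
    simp only [hF, hsucc]
    linarith [div_le_log_sub_log_add_inv_sub_inv (x := S t) (by linarith [hS₁ t]) (ha₀ t) (ha₁ t)]
  calc ∑ t ∈ range T, a t / S t ≤ ∑ t ∈ range T, (F (t + 1) - F t) :=
        sum_le_sum fun t _ => hstep t
    _ = F T - F 0 := sum_range_sub F T
    _ ≤ 1 + log (1 + ∑ t ∈ range T, a t) := by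
        have hinv : 0 ≤ (S T)⁻¹ := inv_nonneg.2 (by linarith [hS₁ T])
        simp only [hF, hS, range_zero, sum_empty, zero_add, log_one, inv_one]
        rw [add_comm 1 (∑ t ∈ range T, a t)]
        linarith

theorem final_potential_bound (N T : ℕ) (q : Fin N → ℝ) (r : ℕ → Fin N → ℝ)
    (hq0 : ∀ i, 0 ≤ q i) (hq1 : ∑ i, q i = 1)
    (hr : ∀ t i, |r t i| ≤ 1)
    (hbal : ∀ t < T, ∑ i, q i *
        w (∑ τ ∈ Finset.range t, r τ i) (∑ τ ∈ Finset.range t, |r τ i|) * r t i = 0) :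
    ∑ i, q i * Phi (∑ τ ∈ Finset.range T, r τ i) (∑ τ ∈ Finset.range T, |r τ i|)
      ≤ 1 + (3 / 2) * ∑ i, q i * (1 + Real.log (1 + ∑ τ ∈ Finset.range T, |r τ i|)) := by
  set P : ℕ → ℝ := fun n => ∑ i, q i * Phi (∑ τ ∈ range n, r τ i) (∑ τ ∈ range n, |r τ i|)
    with hP
  -- `Phi 0 0 = exp (0 / 0) = 1` thanks to `x / 0 = 0`.
  have hP₀ : P 0 = 1 := by simp [hP, Phi, hq1]
  have hstep : ∀ n ∈ range T,
      P (n + 1) - P n ≤ 3 / 2 * ∑ i, q i * (|r n i| / (∑ τ ∈ range n, |r τ i| + 1)) := by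
    intro n hn
    have := sum_mul_Phi_add_le univ q _ _ (r n) (fun i _ => hq0 i)
      (fun i _ => abs_sum_le_sum_abs _ _) (fun i _ => hr n i) (hbal n (mem_range.1 hn))
    simp only [hP, sum_range_succ]
    linarith
  calc P T = P 0 + ∑ n ∈ range T, (P (n + 1) - P n) := by rw [sum_range_sub]; ring
    _ ≤ 1 + ∑ n ∈ range T, 3 / 2 * ∑ i, q i * (|r n i| / (∑ τ ∈ range n, |r τ i| + 1)) := by
        rw [hP₀]; gcongr with n hn; exact hstep n hn
    _ = 1 + 3 / 2 * ∑ i, q i * ∑ n ∈ range T, |r n i| / (∑ τ ∈ range n, |r τ i| + 1) := by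
        simp only [mul_sum]
        rw [sum_comm]
    _ ≤ _ := by
        gcongr with i
        · exact hq0 i
        · exact sum_div_sum_range_add_one_le _ (fun t => abs_nonneg _) (fun t => hr t i) T
end

section
/- For any probability distribution u over [N] and any probability distribution q with q_i > 0, D(u||q) − RE(u||q) = Σ_{i=1}^N u_i ln(1/(i u_i)) ≤ ln(1 + ln N), where D(u||q) = Σ_i u_i ln(1/(i q_i)) and RE(u||q) = Σ_i u_i ln(u_i/q_i). -/
theorem entropy_gap_bound (N : ℕ) (hN : 1 ≤ N) (u q : Fin N → ℝ)
    (hu : ∀ i, 0 ≤ u i) (hu1 : ∑ i, u i = 1)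
    (hq : ∀ i, 0 < q i) (hq1 : ∑ i, q i = 1) :
    (∑ i, u i * Real.log (1 / (((i : ℕ) + 1) * q i))) -
      (∑ i, u i * Real.log (u i / q i))
      = ∑ i, u i * Real.log (1 / (((i : ℕ) + 1) * u i))
    ∧ ∑ i, u i * Real.log (1 / (((i : ℕ) + 1) * u i)) ≤ Real.log (1 + Real.log N) := by
  constructor
  · rw [← Finset.sum_sub_distrib]
    apply Finset.sum_congr rfl
    intro i _
    by_cases hui : u i = 0
    · simp [hui]
    have hi1 : ((i : ℕ) + 1 : ℝ) ≠ 0 := by positivity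
    have hqi := (hq i).ne'
    rw [← mul_sub]
    congr 1
    rw [one_div, one_div, Real.log_inv, Real.log_inv, Real.log_mul hi1 hqi,
      Real.log_mul hi1 hui, Real.log_div hui hqi]
    ring
  · set S : Finset (Fin N) := Finset.univ.filter (fun i => u i ≠ 0) with hS
    have hsum_eq : ∑ i, u i * Real.log (1 / (((i : ℕ) + 1) * u i))
        = ∑ i ∈ S, u i * Real.log (1 / (((i : ℕ) + 1) * u i)) := by
      rw [hS, Finset.sum_filter]
      apply Finset.sum_congr rfl
      intro i _
      by_cases hui : u i = 0 <;> simp [hui]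
    have huS : ∑ i ∈ S, u i = 1 := by
      rw [← hu1, hS, Finset.sum_filter]
      apply Finset.sum_congr rfl
      intro i _
      by_cases hui : u i = 0 <;> simp [hui]
    have hupos : ∀ i ∈ S, 0 < u i := by
      intro i hi
      rw [hS, Finset.mem_filter] at hi
      exact lt_of_le_of_ne (hu i) (Ne.symm hi.2)
    -- Jensen
    have hjensen : ∑ i ∈ S, u i • Real.log (1 / (((i : ℕ) + 1) * u i))
        ≤ Real.log (∑ i ∈ S, u i • (1 / (((i : ℕ) + 1) * u i))) := by
      apply ConcaveOn.le_map_sum strictConcaveOn_log_Ioi.concaveOn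
        (fun i hi => hu i) huS
      intro i hi
      have := hupos i hi
      have : (0:ℝ) < 1 / (((i : ℕ) + 1) * u i) := by positivity
      exact this
    simp only [smul_eq_mul] at hjensen
    have hval : ∑ i ∈ S, u i * (1 / (((i : ℕ) + 1) * u i))
        = ∑ i ∈ S, 1 / ((i : ℕ) + 1 : ℝ) := by
      apply Finset.sum_congr rfl
      intro i hi
      have h := hupos i hi
      field_simp
    -- sum over S is bounded by harmonic N ≤ 1 + log N
    have hbound : ∑ i ∈ S, 1 / ((i : ℕ) + 1 : ℝ) ≤ 1 + Real.log N := by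
      have h1 : ∑ i ∈ S, 1 / ((i : ℕ) + 1 : ℝ) ≤ ∑ i : Fin N, 1 / ((i : ℕ) + 1 : ℝ) := by
        apply Finset.sum_le_sum_of_subset_of_nonneg (Finset.subset_univ S)
        intro i _ _; positivity
      have h2 : ∑ i : Fin N, 1 / ((i : ℕ) + 1 : ℝ) = (harmonic N : ℝ) := by
        rw [Fin.sum_univ_eq_sum_range (fun i => 1 / ((i : ℝ) + 1))]
        rw [harmonic]
        push_cast
        apply Finset.sum_congr rfl
        intro i _
        norm_num
      exact h1.trans (h2.le.trans (harmonic_le_one_add_log N))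
    have hSne : S.Nonempty := by
      by_contra h
      rw [Finset.not_nonempty_iff_eq_empty] at h
      rw [h, Finset.sum_empty] at huS
      norm_num at huS
    have hpos : 0 < ∑ i ∈ S, u i * (1 / (((i : ℕ) + 1) * u i)) := by
      rw [hval]
      apply Finset.sum_pos _ hSne
      intro i _; positivity
    calc ∑ i, u i * Real.log (1 / (((i : ℕ) + 1) * u i))
        = ∑ i ∈ S, u i * Real.log (1 / (((i : ℕ) + 1) * u i)) := hsum_eq
      _ ≤ Real.log (∑ i ∈ S, u i * (1 / (((i : ℕ) + 1) * u i))) := hjensen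
      _ ≤ Real.log (1 + Real.log N) := by
          apply Real.log_le_log hpos
          rw [hval]; exact hbound
end

section
/- Let u be the uniform distribution over a nonempty subset S of [N] of size m, so that u puts mass 1/m on each of the indices 1, ..., m after sorting. Then Σ_{i∈S} (1/m) ln(1/(i·(1/m))) = ln m − (1/m) ln(m!) ≤ 1 − ln(sqrt(2πm))/m ≤ 1. -/
open Real Finset

lemma log_factorial_eq_sum (m : ℕ) :
    Real.log (Nat.factorial m) = ∑ i ∈ Finset.Icc 1 m, Real.log i := by
  induction m with
  | zero => simp
  | succ n ih =>
    rw [Nat.factorial_succ, Nat.cast_mul,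
      Real.log_mul (by positivity) (by exact_mod_cast (Nat.factorial_pos n).ne'),
      Finset.sum_Icc_succ_top (by omega), ih, add_comm]

lemma stirling_lower (m : ℕ) (hm : 1 ≤ m) :
    Real.sqrt (2 * Real.pi * m) * ((m : ℝ) / Real.exp 1) ^ m ≤ Nat.factorial m := by
  have h := Stirling.stirlingSeq'_antitone.le_of_tendsto
    (Stirling.tendsto_stirlingSeq_sqrt_pi.comp (Filter.tendsto_add_atTop_nat 1)) (m - 1)
  simp only [Function.comp_apply, Nat.succ_eq_add_one] at h
  rw [Nat.sub_add_cancel hm] at h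
  have hpos : (0:ℝ) < Real.sqrt (2 * m) * ((m : ℝ) / Real.exp 1) ^ m := by
    have : (0:ℝ) < m := by exact_mod_cast hm
    positivity
  rw [Stirling.stirlingSeq, le_div_iff₀ hpos] at h
  calc Real.sqrt (2 * Real.pi * m) * ((m : ℝ) / Real.exp 1) ^ m
      = Real.sqrt π * (Real.sqrt (2 * m) * ((m : ℝ) / Real.exp 1) ^ m) := by
        rw [show (2 * Real.pi * (m:ℝ)) = π * (2 * m) by ring,
          Real.sqrt_mul Real.pi_pos.le, mul_assoc]
    _ ≤ _ := h

theorem uniform_gap_bound (N m : ℕ) (hm : 1 ≤ m) (hmN : m ≤ N) :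
    (∑ i ∈ Finset.Icc 1 m, (1 / (m : ℝ)) * Real.log (1 / ((i : ℝ) * (1 / (m : ℝ)))))
      = Real.log m - (1 / (m : ℝ)) * Real.log (Nat.factorial m)
    ∧ Real.log m - (1 / (m : ℝ)) * Real.log (Nat.factorial m)
      ≤ 1 - Real.log (Real.sqrt (2 * Real.pi * m)) / m
    ∧ 1 - Real.log (Real.sqrt (2 * Real.pi * m)) / m ≤ 1 := by
  have hm0 : (0:ℝ) < m := by exact_mod_cast hm
  refine ⟨?_, ?_, ?_⟩
  · have hcard : (Finset.Icc 1 m).card = m := by simp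
    have hlm : Real.log m = ∑ i ∈ Finset.Icc 1 m, (1 / (m:ℝ)) * Real.log m := by
      rw [Finset.sum_const, hcard, nsmul_eq_mul]; field_simp
    rw [log_factorial_eq_sum, Finset.mul_sum, hlm, ← Finset.sum_sub_distrib]
    apply Finset.sum_congr rfl
    intro i hi
    have hi1 : 1 ≤ i := (Finset.mem_Icc.mp hi).1
    have hi0 : (0:ℝ) < i := by exact_mod_cast hi1
    rw [← mul_sub, ← Real.log_div hm0.ne' hi0.ne']
    congr 1
    rw [one_div ((i:ℝ) * (1/m)), Real.log_inv, Real.log_div hm0.ne' hi0.ne']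
    rw [Real.log_mul hi0.ne' (by positivity), Real.log_div one_ne_zero hm0.ne']
    simp
    ring
  · have h := stirling_lower m hm
    have hlog := Real.log_le_log (by positivity) h
    rw [Real.log_mul (by positivity) (by positivity), Real.log_pow,
      Real.log_div hm0.ne' (Real.exp_pos 1).ne', Real.log_exp] at hlog
    rw [sub_le_sub_iff]
    set L := Real.log (Real.sqrt (2 * Real.pi * m)) with hL
    have h2 : (Real.log m + L / m) * m
        ≤ (1 + (1/m) * Real.log (Nat.factorial m)) * m := by
      have e1 : (Real.log m + L / m) * m = m * Real.log m + L := by field_simp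
      have e2 : (1 + (1/m) * Real.log (Nat.factorial m)) * m
          = m + Real.log (Nat.factorial m) := by field_simp
      rw [e1, e2]; linarith
    exact le_of_mul_le_mul_right h2 hm0
  · have hm1 : (1:ℝ) ≤ m := by exact_mod_cast hm
    have h1 : (1:ℝ) ≤ 2 * Real.pi * m := by nlinarith [Real.pi_gt_three, hm1]
    have : 0 ≤ Real.log (Real.sqrt (2 * Real.pi * m)) :=
      Real.log_nonneg (Real.one_le_sqrt.mpr h1)
    have := div_nonneg this hm0.le
    linarith
end

section
/- Let v_1, ..., v_T ≥ 0 and define h({v_1,...,v_T}) as the minimum of Σ_{j=1}^M a_j over all M ∈ ℕ⁺, weights a_j > 0, and intervals U_j = [s_j, t_j] ⊆ [1,T] (with integer endpoints) such that v_t = Σ_j a_j·1{t ∈ U_j} for all t. Then h({v_1,...,v_T}) = Σ_{t=1}^T max(v_t − v_{t-1}, 0), where v_0 = 0. -/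
/-!
Lower bound: in any decomposition, `v x - v (x - 1)` is at most the total weight of the
intervals starting at `x`, and every interval starts exactly once in `[1, T]`.

Upper bound, by induction on `T`: given a decomposition on `[1, T]`, extend a fraction `θ` of
every interval ending at `T` to end at `T + 1`, with `θ · v T = min (v T) (v (T + 1))`, and add
the singleton `{T + 1}` with weight `max (v (T + 1) - v T) 0`. The total weight grows by exactly
that positive increment.
-/

open Finset

namespace IntervalDecomposition

def intervalIndicator (s t x : ℕ) : ℝ := if x ∈ Icc s t then 1 else 0

section Decomposition

variable {ι : Type*} [Fintype ι]

def intervalSum (a : ι → ℝ) (s t : ι → ℕ) (x : ℕ) : ℝ :=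
  ∑ i, a i * intervalIndicator (s i) (t i) x

structure IsDecomposition (T : ℕ) (v : ℕ → ℝ) (a : ι → ℝ) (s t : ι → ℕ) : Prop where
  weight_nonneg : ∀ i, 0 ≤ a i
  one_le_left : ∀ i, 1 ≤ s i
  left_le_right : ∀ i, s i ≤ t i
  right_le : ∀ i, t i ≤ T
  eq_intervalSum : ∀ x ≤ T, v x = intervalSum a s t x

lemma intervalIndicator_sub_pred_le (s t x : ℕ) :
    intervalIndicator s t x - intervalIndicator s t (x - 1) ≤ if s = x then 1 else 0 := by
  simp only [intervalIndicator, mem_Icc]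
  split_ifs <;> norm_num; omega

lemma intervalSum_sub_pred_le {a : ι → ℝ} (ha : ∀ i, 0 ≤ a i) (s t : ι → ℕ) (x : ℕ) :
    intervalSum a s t x - intervalSum a s t (x - 1) ≤ ∑ i, if s i = x then a i else 0 := by
  rw [intervalSum, intervalSum, ← sum_sub_distrib]
  gcongr with i
  calc a i * intervalIndicator (s i) (t i) x - a i * intervalIndicator (s i) (t i) (x - 1)
      ≤ a i * if s i = x then 1 else 0 := by
        rw [← mul_sub]; exact mul_le_mul_of_nonneg_left (intervalIndicator_sub_pred_le ..) (ha i)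
    _ = if s i = x then a i else 0 := by simp only [mul_ite, mul_one, mul_zero]

theorem IsDecomposition.sum_max_sub_pred_le {T : ℕ} {v : ℕ → ℝ} {a : ι → ℝ} {s t : ι → ℕ}
    (h : IsDecomposition T v a s t) :
    ∑ x ∈ Icc 1 T, max (v x - v (x - 1)) 0 ≤ ∑ i, a i :=
  calc ∑ x ∈ Icc 1 T, max (v x - v (x - 1)) 0
      ≤ ∑ x ∈ Icc 1 T, ∑ i, if s i = x then a i else 0 := by
        refine sum_le_sum fun x hx => max_le ?_ (sum_nonneg fun i _ => ?_)
        · have hxT := (mem_Icc.1 hx).2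
          rw [h.eq_intervalSum x hxT, h.eq_intervalSum (x - 1) (by omega)]
          exact intervalSum_sub_pred_le h.weight_nonneg s t x
        · split_ifs
          exacts [h.weight_nonneg i, le_rfl]
    _ = ∑ i, a i := by
        rw [sum_comm]
        refine sum_congr rfl fun i _ => ?_
        have hsi : s i ∈ Icc 1 T :=
          mem_Icc.2 ⟨h.one_le_left i, (h.left_le_right i).trans (h.right_le i)⟩
        rw [sum_ite_eq, if_pos hsi]

lemma IsDecomposition.of_forall_mem_Icc {T : ℕ} {v : ℕ → ℝ} {a : ι → ℝ} {s t : ι → ℕ}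
    (hv0 : v 0 = 0) (ha : ∀ i, 0 ≤ a i) (hst : ∀ i, 1 ≤ s i ∧ s i ≤ t i ∧ t i ≤ T)
    (hv : ∀ x ∈ Icc 1 T, v x = intervalSum a s t x) : IsDecomposition T v a s t where
  weight_nonneg := ha
  one_le_left i := (hst i).1
  left_le_right i := (hst i).2.1
  right_le i := (hst i).2.2
  eq_intervalSum x hx := by
    rcases x.eq_zero_or_pos with rfl | hx0
    · refine hv0.trans (sum_eq_zero fun i _ => ?_).symm
      rw [intervalIndicator, if_neg (by rw [mem_Icc]; have := (hst i).1; omega), mul_zero]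
    · exact hv x (mem_Icc.2 ⟨hx0, hx⟩)

end Decomposition

section Extension

variable {ι : Type*} [Fintype ι] (T : ℕ) (θ δ : ℝ) (a : ι → ℝ) (s t : ι → ℕ)

/-- Each interval ending at `T` is split into a part of weight `θ * a i` extended to `T + 1`
and a part of weight `(1 - θ) * a i` kept as is; `none` indexes the new interval `{T + 1}`. -/
def extendWeight : Option (ι × Bool) → ℝ
  | none => δ
  | some (i, true) => if t i = T then θ * a i else a i
  | some (i, false) => if t i = T then (1 - θ) * a i else 0

def extendLeft : Option (ι × Bool) → ℕ
  | none => T + 1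
  | some (i, _) => s i

def extendRight : Option (ι × Bool) → ℕ
  | none => T + 1
  | some (i, true) => if t i = T then T + 1 else t i
  | some (i, false) => t i

lemma sum_extendWeight : ∑ o, extendWeight T θ δ a t o = ∑ i, a i + δ := by
  rw [Fintype.sum_option, Fintype.sum_prod_type, add_comm]
  congr 1
  refine sum_congr rfl fun i _ => ?_
  simp only [Fintype.sum_bool, extendWeight]
  split_ifs <;> ring

lemma intervalSum_extend_of_le {x : ℕ} (hx : x ≤ T) :
    intervalSum (extendWeight T θ δ a t) (extendLeft T s) (extendRight T t) x
      = intervalSum a s t x := by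
  have hnone : intervalIndicator (T + 1) (T + 1) x = 0 := if_neg (by rw [mem_Icc]; omega)
  rw [intervalSum, Fintype.sum_option, Fintype.sum_prod_type]
  simp only [Fintype.sum_bool, extendWeight, extendLeft, extendRight, hnone, mul_zero, zero_add]
  refine sum_congr rfl fun i _ => ?_
  have hT : intervalIndicator (s i) (T + 1) x = intervalIndicator (s i) T x :=
    if_congr (by simp only [mem_Icc]; omega) rfl rfl
  split_ifs with h
  · rw [hT, h]; ring
  · ring

lemma intervalSum_extend_succ (hst : ∀ i, s i ≤ t i) (ht : ∀ i, t i ≤ T) :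
    intervalSum (extendWeight T θ δ a t) (extendLeft T s) (extendRight T t) (T + 1)
      = θ * intervalSum a s t T + δ := by
  have hnone : intervalIndicator (T + 1) (T + 1) (T + 1) = 1 := if_pos (by simp)
  rw [intervalSum, intervalSum, Fintype.sum_option, Fintype.sum_prod_type, mul_sum, add_comm]
  simp only [Fintype.sum_bool, extendWeight, extendLeft, extendRight, hnone, mul_one]
  congr 1
  refine sum_congr rfl fun i _ => ?_
  have hsi := hst i
  have hti := ht i
  split_ifs with h
  · simp only [intervalIndicator, mem_Icc, h] at hsi ⊢
    rw [if_pos ⟨by omega, le_rfl⟩, if_neg (by omega), if_pos ⟨hsi, le_rfl⟩]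
    ring
  · simp only [intervalIndicator, mem_Icc]
    rw [if_neg (by omega), if_neg (by omega)]
    ring

variable {T θ δ a s t} in
theorem IsDecomposition.extend {v : ℕ → ℝ} (h : IsDecomposition T v a s t) (hθ₀ : 0 ≤ θ)
    (hθ₁ : θ ≤ 1) (hδ : 0 ≤ δ) (hv : v (T + 1) = θ * v T + δ) :
    IsDecomposition (T + 1) v (extendWeight T θ δ a t) (extendLeft T s) (extendRight T t) where
  weight_nonneg
    | none => hδ
    | some (i, true) => by
        have := h.weight_nonneg i
        dsimp only [extendWeight]; split_ifs <;> positivity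
    | some (i, false) => by
        have := h.weight_nonneg i
        have : 0 ≤ 1 - θ := by linarith
        dsimp only [extendWeight]; split_ifs <;> positivity
  one_le_left
    | none => T.succ_pos
    | some (i, _) => h.one_le_left i
  left_le_right
    | none => le_rfl
    | some (i, true) => by
        have := h.left_le_right i
        dsimp only [extendLeft, extendRight]; split_ifs <;> omega
    | some (i, false) => h.left_le_right i
  right_le
    | none => le_rfl
    | some (i, true) => by
        have := h.right_le i
        dsimp only [extendRight]; split_ifs <;> omega
    | some (i, false) => (h.right_le i).trans T.le_succ
  eq_intervalSum x hx := by
    rcases hx.lt_or_eq with hx | rfl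
    · rw [intervalSum_extend_of_le T θ δ a s t (by omega), h.eq_intervalSum x (by omega)]
    · rw [intervalSum_extend_succ T θ δ a s t h.left_le_right h.right_le, hv,
        h.eq_intervalSum T le_rfl]

end Extension

lemma min_div_mul_add_max_sub {p q : ℝ} (hp : 0 ≤ p) (hq : 0 ≤ q) :
    min p q / p * p + max (q - p) 0 = q := by
  rcases hp.eq_or_lt with rfl | hp
  · simp [hq]
  rw [div_mul_cancel₀ _ hp.ne']
  rcases le_total p q with hpq | hpq
  · rw [min_eq_left hpq, max_eq_left (by linarith)]; ring
  · rw [min_eq_right hpq, max_eq_right (by linarith)]; ring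

theorem exists_isDecomposition (T : ℕ) (v : ℕ → ℝ) (hv0 : v 0 = 0)
    (hv : ∀ x ∈ Icc 1 T, 0 ≤ v x) :
    ∃ (ι : Type) (_ : Fintype ι) (a : ι → ℝ) (s t : ι → ℕ),
      IsDecomposition T v a s t ∧ ∑ i, a i = ∑ x ∈ Icc 1 T, max (v x - v (x - 1)) 0 := by
  induction T with
  | zero =>
    refine ⟨Empty, inferInstance, Empty.elim, Empty.elim, Empty.elim,
      ⟨nofun, nofun, nofun, nofun, fun x hx => ?_⟩, by simp⟩
    rw [Nat.le_zero.1 hx, hv0]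
    simp [intervalSum]
  | succ T ih =>
    obtain ⟨ι, _, a, s, t, h, hsum⟩ :=
      ih fun x hx => hv x (Icc_subset_Icc_right T.le_succ hx)
    have hvT : 0 ≤ v T := by
      rcases T.eq_zero_or_pos with rfl | hT
      exacts [hv0.ge, hv T (mem_Icc.2 ⟨hT, T.le_succ⟩)]
    have hvT' : 0 ≤ v (T + 1) := hv (T + 1) (mem_Icc.2 ⟨by omega, le_rfl⟩)
    refine ⟨_, inferInstance, _, _, _,
      h.extend (div_nonneg (le_min hvT hvT') hvT) (div_le_one_of_le₀ (min_le_left _ _) hvT)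
        (le_max_right _ 0) (min_div_mul_add_max_sub hvT hvT').symm, ?_⟩
    rw [sum_extendWeight, hsum, sum_Icc_succ_top (by omega), Nat.add_sub_cancel]

lemma exists_fin_reindex_pos {ι : Type*} [Fintype ι] {a : ι → ℝ} (ha : ∀ i, 0 ≤ a i) :
    ∃ (M : ℕ) (e : Fin M → ι), (∀ j, 0 < a (e j)) ∧
      ∀ g : ι → ℝ, ∑ j, a (e j) * g (e j) = ∑ i, a i * g i := by
  classical
  let e := (Fintype.equivFin {i // 0 < a i}).symm
  refine ⟨_, fun j => e j, fun j => (e j).2, fun g => ?_⟩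
  calc ∑ j, a (e j) * g (e j)
      = ∑ i : {i // 0 < a i}, a i * g i := e.sum_comp fun i => a i * g i
    _ = ∑ i ∈ univ.filter (0 < a ·), a i * g i :=
          (sum_subtype _ (fun _ => mem_filter_univ _) fun i => a i * g i).symm
    _ = ∑ i, a i * g i := sum_filter_of_ne fun i _ hi =>
          (ha i).lt_of_ne (Ne.symm (left_ne_zero_of_mul hi))

end IntervalDecomposition

open IntervalDecomposition

theorem interval_decomposition (T : ℕ) (v : ℕ → ℝ)
    (hv0 : v 0 = 0) (hv : ∀ t ∈ Finset.Icc 1 T, 0 ≤ v t) :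
    IsLeast
      {S : ℝ | ∃ (M : ℕ) (a : Fin M → ℝ) (s t : Fin M → ℕ),
        (∀ j, 0 < a j) ∧
        (∀ j, 1 ≤ s j ∧ s j ≤ t j ∧ t j ≤ T) ∧
        (∀ x ∈ Finset.Icc 1 T,
          v x = ∑ j, a j * (if x ∈ Finset.Icc (s j) (t j) then (1 : ℝ) else 0)) ∧
        S = ∑ j, a j}
      (∑ t ∈ Finset.Icc 1 T, max (v t - v (t - 1)) 0) := by
  constructor
  · obtain ⟨ι, _, a, s, t, h, hsum⟩ := exists_isDecomposition T v hv0 hv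
    obtain ⟨M, e, hpos, hreindex⟩ := exists_fin_reindex_pos h.weight_nonneg
    refine ⟨M, a ∘ e, s ∘ e, t ∘ e, hpos,
      fun j => ⟨h.one_le_left _, h.left_le_right _, h.right_le _⟩, fun x hx => ?_, ?_⟩
    · rw [h.eq_intervalSum x (mem_Icc.1 hx).2]
      exact (hreindex fun i => intervalIndicator (s i) (t i) x).symm
    · simpa only [mul_one, ← hsum, Function.comp_apply] using (hreindex fun _ => 1).symm
  · rintro S ⟨M, a, s, t, hpos, hst, hv, rfl⟩
    exact (IsDecomposition.of_forall_mem_Icc hv0 (fun j => (hpos j).le) hst hv).sum_max_sub_pred_le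
end

section
/- Suppose an algorithm guarantees that for every interval [s,t] ⊆ [1,T] and every expert i, Σ_{τ=s}^t r_{τ,i} ≤ sqrt(A · Σ_{τ=s}^t z_{τ,i}), where z_{τ,i} ≥ 0 and A ≥ 0. Then for any sequence of competitor vectors u_1, ..., u_T ∈ ℝ_+^N, Σ_{t=1}^T Σ_i u_{t,i} r_{t,i} ≤ sqrt(A · V(u_{1:T}) · Σ_{t=1}^T Σ_i u_{t,i} z_{t,i}), where V(u_{1:T}) = Σ_{t=1}^T Σ_i max(u_{t,i} − u_{t-1,i}, 0) with u_0 = 0. -/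
open Finset

/-- Telescoping sum over `Icc a b`. -/
lemma tvr_icc_tel (f : ℕ → ℝ) (a b : ℕ) (h : a ≤ b) :
    ∑ e ∈ Finset.Icc a b, (f e - f (e+1)) = f a - f (b+1) := by
  obtain ⟨n, rfl⟩ := Nat.exists_eq_add_of_le h
  induction n with
  | zero => simp
  | succ n ih =>
      rw [show a + (n+1) = (a+n)+1 by omega,
        Finset.sum_Icc_succ_top (by omega), ih (by omega)]
      ring

/-- Telescoping sum with predecessors over `Icc 1 b`. -/
lemma tvr_icc_tel' (f : ℕ → ℝ) (b : ℕ) :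
    ∑ s ∈ Finset.Icc 1 b, (f s - f (s-1)) = f b - f 0 := by
  induction b with
  | zero => simp
  | succ n ih =>
      rw [Finset.sum_Icc_succ_top (by omega), ih]
      simp

/-- minimum of `v` over `Icc s e` (junk value 0 if empty). -/
noncomputable def tvrM (v : ℕ → ℝ) (s e : ℕ) : ℝ :=
  if h : s ≤ e then (Finset.Icc s e).inf' (Finset.nonempty_Icc.2 h) v else 0

lemma tvrM_self (v : ℕ → ℝ) (s : ℕ) : tvrM v s s = v s := by simp [tvrM]

lemma tvrM_left (v : ℕ → ℝ) {a b : ℕ} (h : a < b) :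
    tvrM v a b = min (v a) (tvrM v (a+1) b) := by
  have h1 : a ≤ b := h.le
  have h2 : a + 1 ≤ b := h
  have hins : Finset.Icc a b = insert a (Finset.Icc (a+1) b) := by
    ext x; simp [Finset.mem_Icc]; omega
  rw [tvrM, tvrM, dif_pos h1, dif_pos h2]
  rw [Finset.inf'_congr (Finset.nonempty_Icc.2 h1) hins (fun _ _ => rfl),
    Finset.inf'_insert (Finset.nonempty_Icc.2 h2)]

lemma tvrM_right (v : ℕ → ℝ) {a b : ℕ} (h : a ≤ b) :
    tvrM v a (b+1) = min (tvrM v a b) (v (b+1)) := by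
  have h1 : a ≤ b + 1 := by omega
  have hins : Finset.Icc a (b+1) = insert (b+1) (Finset.Icc a b) := by
    ext x; simp [Finset.mem_Icc]; omega
  rw [tvrM, tvrM, dif_pos h1, dif_pos h]
  rw [Finset.inf'_congr (Finset.nonempty_Icc.2 h1) hins (fun _ _ => rfl),
    Finset.inf'_insert (Finset.nonempty_Icc.2 h)]
  rw [min_comm]

lemma tvrM_nonneg (v : ℕ → ℝ) (hv : ∀ t, 0 ≤ v t) (s e : ℕ) : 0 ≤ tvrM v s e := by
  rw [tvrM]
  split
  · exact Finset.le_inf' _ _ fun t _ => hv t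
  · exact le_refl 0

lemma tvrM_zero_of_mem (v : ℕ → ℝ) (hv : ∀ t, 0 ≤ v t) {s e t : ℕ}
    (hst : s ≤ t) (hte : t ≤ e) (hvt : v t = 0) : tvrM v s e = 0 := by
  have h : s ≤ e := hst.trans hte
  refine le_antisymm ?_ (tvrM_nonneg v hv s e)
  rw [tvrM, dif_pos h]
  calc (Finset.Icc s e).inf' _ v ≤ v t :=
        Finset.inf'_le _ (Finset.mem_Icc.2 ⟨hst, hte⟩)
    _ = 0 := hvt

/-- the weight of interval [s,e] in the minimal decomposition -/
noncomputable def tvrW (v : ℕ → ℝ) (s e : ℕ) : ℝ :=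
  tvrM v s e - tvrM v (s-1) e - tvrM v s (e+1) + tvrM v (s-1) (e+1)

lemma tvrW_nonneg (v : ℕ → ℝ) {s e : ℕ} (hs : 1 ≤ s) (hse : s ≤ e) :
    0 ≤ tvrW v s e := by
  have e1 : tvrM v (s-1) e = min (v (s-1)) (tvrM v s e) := by
    have := tvrM_left v (a := s-1) (b := e) (by omega)
    rwa [show s - 1 + 1 = s by omega] at this
  have e2 : tvrM v s (e+1) = min (tvrM v s e) (v (e+1)) := tvrM_right v hse
  have e3 : tvrM v (s-1) (e+1) = min (v (s-1)) (tvrM v s (e+1)) := by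
    have := tvrM_left v (a := s-1) (b := e+1) (by omega)
    rwa [show s - 1 + 1 = s by omega] at this
  rw [tvrW, e1, e2, e3, e2]
  set a := v (s-1); set b := tvrM v s e; set c := v (e+1)
  rcases le_total a b with hab | hab <;> rcases le_total b c with hbc | hbc
  · rw [min_eq_left hab, min_eq_left hbc, min_eq_left hab]; ring_nf; linarith
  · rw [min_eq_left hab, min_eq_right hbc]
    rcases le_total a c with hac | hac
    · rw [min_eq_left hac]; linarith
    · rw [min_eq_right hac]; linarith
  · rw [min_eq_right hab, min_eq_left hbc, min_eq_right hab]; linarith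
  · rw [min_eq_right hab, min_eq_right hbc, min_eq_right (hbc.trans hab)]; linarith

/-- Cauchy–Schwarz for square roots. -/
lemma tvr_cs {ι : Type*} (s : Finset ι) (a b : ι → ℝ)
    (ha : ∀ i ∈ s, 0 ≤ a i) (hb : ∀ i ∈ s, 0 ≤ b i) :
    ∑ i ∈ s, Real.sqrt (a i) * Real.sqrt (b i) ≤
      Real.sqrt (∑ i ∈ s, a i) * Real.sqrt (∑ i ∈ s, b i) := by
  have h0a : 0 ≤ ∑ i ∈ s, a i := Finset.sum_nonneg ha
  have h0b : 0 ≤ ∑ i ∈ s, b i := Finset.sum_nonneg hb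
  rw [← Real.sqrt_mul h0a]
  rw [Real.le_sqrt (Finset.sum_nonneg fun i hi =>
    mul_nonneg (Real.sqrt_nonneg _) (Real.sqrt_nonneg _)) (mul_nonneg h0a h0b)]
  calc (∑ i ∈ s, Real.sqrt (a i) * Real.sqrt (b i))^2
      ≤ (∑ i ∈ s, Real.sqrt (a i)^2) * ∑ i ∈ s, Real.sqrt (b i)^2 :=
        Finset.sum_mul_sq_le_sq_mul_sq s _ _
    _ = (∑ i ∈ s, a i) * ∑ i ∈ s, b i := by
        rw [Finset.sum_congr rfl fun i hi => Real.sq_sqrt (ha i hi),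
          Finset.sum_congr rfl fun i hi => Real.sq_sqrt (hb i hi)]
lemma tvr_scalar (T : ℕ) (r z v : ℕ → ℝ) (A : ℝ) (hA : 0 ≤ A)
    (hz : ∀ t, 0 ≤ z t) (hv : ∀ t, 0 ≤ v t) (hv0 : v 0 = 0) (hvT : v (T+1) = 0)
    (hadapt : ∀ s t : ℕ, 1 ≤ s → s ≤ t → t ≤ T →
      ∑ τ ∈ Finset.Icc s t, r τ ≤ Real.sqrt (A * ∑ τ ∈ Finset.Icc s t, z τ)) :
    ∑ t ∈ Finset.Icc 1 T, v t * r t ≤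
      Real.sqrt (∑ t ∈ Finset.Icc 1 T, max (v t - v (t-1)) 0) *
      Real.sqrt (A * ∑ t ∈ Finset.Icc 1 T, v t * z t) := by
  -- inner telescoping over the right endpoint
  have hinner : ∀ s t', 1 ≤ s → s ≤ t' → t' ≤ T →
      ∑ e ∈ Finset.Icc t' T, tvrW v s e = tvrM v s t' - tvrM v (s-1) t' := by
    intro s t' hs hst htT
    have hterm : ∀ e, tvrW v s e =
        (fun e => tvrM v s e - tvrM v (s-1) e) e -
        (fun e => tvrM v s e - tvrM v (s-1) e) (e+1) := by
      intro e; simp only [tvrW]; ring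
    rw [Finset.sum_congr rfl (fun e _ => hterm e), tvr_icc_tel _ t' T htT]
    have z1 : tvrM v s (T+1) = 0 :=
      tvrM_zero_of_mem v hv (by omega) (le_refl (T+1)) hvT
    have z2 : tvrM v (s-1) (T+1) = 0 :=
      tvrM_zero_of_mem v hv (by omega) (le_refl (T+1)) hvT
    simp only [z1, z2]; ring
  -- the double telescoping identity
  have key2 : ∀ t ∈ Finset.Icc 1 T,
      ∑ s ∈ Finset.Icc 1 t, ∑ e ∈ Finset.Icc t T, tvrW v s e = v t := by
    intro t ht; rw [Finset.mem_Icc] at ht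
    have h1 : ∑ s ∈ Finset.Icc 1 t, ∑ e ∈ Finset.Icc t T, tvrW v s e =
        ∑ s ∈ Finset.Icc 1 t, (tvrM v s t - tvrM v (s-1) t) := by
      apply Finset.sum_congr rfl; intro s hs
      rw [Finset.mem_Icc] at hs
      exact hinner s t hs.1 hs.2 ht.2
    rw [h1, tvr_icc_tel' (fun s => tvrM v s t) t, tvrM_self]
    have : tvrM v 0 t = 0 := tvrM_zero_of_mem v hv (le_refl 0) (Nat.zero_le t) hv0
    rw [this]; ring
  -- total weight equals total variation
  have keyV : ∑ s ∈ Finset.Icc 1 T, ∑ e ∈ Finset.Icc s T, tvrW v s e =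
      ∑ t ∈ Finset.Icc 1 T, max (v t - v (t-1)) 0 := by
    apply Finset.sum_congr rfl; intro s hs; rw [Finset.mem_Icc] at hs
    rw [hinner s s hs.1 le_rfl hs.2, tvrM_self]
    have hm : tvrM v (s-1) s = min (v (s-1)) (v s) := by
      have h := tvrM_left v (a := s-1) (b := s) (by omega)
      rwa [show s-1+1 = s by omega, tvrM_self] at h
    rw [hm]
    rcases le_total (v (s-1)) (v s) with h | h
    · rw [min_eq_left h, max_eq_left (by linarith)]
    · rw [min_eq_right h, max_eq_right (by linarith)]; ring
  -- the swap identity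
  have key3 : ∀ g : ℕ → ℝ,
      ∑ s ∈ Finset.Icc 1 T, ∑ e ∈ Finset.Icc s T,
        tvrW v s e * (∑ t' ∈ Finset.Icc s e, g t') =
      ∑ t ∈ Finset.Icc 1 T, v t * g t := by
    intro g
    have step1 : ∀ s e, 1 ≤ s → e ≤ T →
        tvrW v s e * (∑ t' ∈ Finset.Icc s e, g t') =
        ∑ t' ∈ Finset.Icc 1 T,
          (if s ≤ t' ∧ t' ≤ e then tvrW v s e * g t' else 0) := by
      intro s e hs he
      rw [← Finset.sum_filter]
      have hf : (Finset.Icc 1 T).filter (fun t' => s ≤ t' ∧ t' ≤ e) = Finset.Icc s e := by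
        ext x; simp only [Finset.mem_filter, Finset.mem_Icc]; omega
      rw [hf, Finset.mul_sum]
    have step2 : ∀ (F : ℕ → ℝ) (s : ℕ), 1 ≤ s →
        ∑ e ∈ Finset.Icc s T, F e = ∑ e ∈ Finset.Icc 1 T, (if s ≤ e then F e else 0) := by
      intro F s hs
      rw [← Finset.sum_filter]
      congr 1
      ext x; simp only [Finset.mem_filter, Finset.mem_Icc]; omega
    calc ∑ s ∈ Finset.Icc 1 T, ∑ e ∈ Finset.Icc s T,
          tvrW v s e * ∑ t' ∈ Finset.Icc s e, g t'
        = ∑ s ∈ Finset.Icc 1 T, ∑ e ∈ Finset.Icc 1 T, ∑ t' ∈ Finset.Icc 1 T,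
            (if s ≤ t' ∧ t' ≤ e then tvrW v s e * g t' else 0) := by
          apply Finset.sum_congr rfl; intro s hs; rw [Finset.mem_Icc] at hs
          rw [step2 (fun e => tvrW v s e * ∑ t' ∈ Finset.Icc s e, g t') s hs.1]
          apply Finset.sum_congr rfl; intro e he; rw [Finset.mem_Icc] at he
          by_cases hse : s ≤ e
          · rw [if_pos hse]; exact step1 s e hs.1 he.2
          · rw [if_neg hse]
            symm; apply Finset.sum_eq_zero; intro t' _
            rw [if_neg (fun hc => hse (le_trans hc.1 hc.2))]
      _ = ∑ t' ∈ Finset.Icc 1 T, ∑ s ∈ Finset.Icc 1 T, ∑ e ∈ Finset.Icc 1 T,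
            (if s ≤ t' ∧ t' ≤ e then tvrW v s e * g t' else 0) := by
          rw [show (∑ s ∈ Finset.Icc 1 T, ∑ e ∈ Finset.Icc 1 T, ∑ t' ∈ Finset.Icc 1 T,
              (if s ≤ t' ∧ t' ≤ e then tvrW v s e * g t' else 0)) =
              ∑ s ∈ Finset.Icc 1 T, ∑ t' ∈ Finset.Icc 1 T, ∑ e ∈ Finset.Icc 1 T,
              (if s ≤ t' ∧ t' ≤ e then tvrW v s e * g t' else 0) from
            Finset.sum_congr rfl fun s _ => Finset.sum_comm]
          exact Finset.sum_comm
      _ = ∑ t ∈ Finset.Icc 1 T, v t * g t := by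
          apply Finset.sum_congr rfl; intro t ht; rw [Finset.mem_Icc] at ht
          have e1 : ∀ s, ∑ e ∈ Finset.Icc 1 T,
              (if s ≤ t ∧ t ≤ e then tvrW v s e * g t else 0) =
              if s ≤ t then ∑ e ∈ Finset.Icc t T, tvrW v s e * g t else 0 := by
            intro s
            by_cases hst : s ≤ t
            · rw [if_pos hst]
              have h2 : ∑ e ∈ Finset.Icc 1 T,
                  (if s ≤ t ∧ t ≤ e then tvrW v s e * g t else 0) =
                  ∑ e ∈ Finset.Icc 1 T, (if t ≤ e then tvrW v s e * g t else 0) := by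
                apply Finset.sum_congr rfl; intro e _
                by_cases hte : t ≤ e
                · rw [if_pos ⟨hst, hte⟩, if_pos hte]
                · rw [if_neg (fun hc => hte hc.2), if_neg hte]
              rw [h2, ← Finset.sum_filter]
              congr 1
              ext x; simp only [Finset.mem_filter, Finset.mem_Icc]; omega
            · rw [if_neg hst]
              apply Finset.sum_eq_zero; intro e _
              rw [if_neg (fun hc => hst hc.1)]
          have h3 : ∑ s ∈ Finset.Icc 1 T, ∑ e ∈ Finset.Icc 1 T,
              (if s ≤ t ∧ t ≤ e then tvrW v s e * g t else 0) =
              ∑ s ∈ Finset.Icc 1 T,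
                (if s ≤ t then ∑ e ∈ Finset.Icc t T, tvrW v s e * g t else 0) :=
            Finset.sum_congr rfl fun s _ => e1 s
          rw [h3, ← Finset.sum_filter]
          have hf : (Finset.Icc 1 T).filter (fun s => s ≤ t) = Finset.Icc 1 t := by
            ext x; simp only [Finset.mem_filter, Finset.mem_Icc]; omega
          rw [hf]
          rw [show (∑ s ∈ Finset.Icc 1 t, ∑ e ∈ Finset.Icc t T, tvrW v s e * g t) =
              (∑ s ∈ Finset.Icc 1 t, ∑ e ∈ Finset.Icc t T, tvrW v s e) * g t from by
            rw [Finset.sum_mul]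
            exact Finset.sum_congr rfl fun s _ => (Finset.sum_mul _ _ _).symm]
          rw [key2 t (Finset.mem_Icc.2 ht)]
  -- main chain
  have hZ : ∀ s e : ℕ, 0 ≤ A * ∑ τ ∈ Finset.Icc s e, z τ :=
    fun s e => mul_nonneg hA (Finset.sum_nonneg fun τ _ => hz τ)
  calc ∑ t ∈ Finset.Icc 1 T, v t * r t
      = ∑ s ∈ Finset.Icc 1 T, ∑ e ∈ Finset.Icc s T,
          tvrW v s e * (∑ τ ∈ Finset.Icc s e, r τ) := (key3 r).symm
    _ ≤ ∑ s ∈ Finset.Icc 1 T, ∑ e ∈ Finset.Icc s T,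
          tvrW v s e * Real.sqrt (A * ∑ τ ∈ Finset.Icc s e, z τ) := by
        apply Finset.sum_le_sum; intro s hs
        apply Finset.sum_le_sum; intro e he
        rw [Finset.mem_Icc] at hs he
        exact mul_le_mul_of_nonneg_left (hadapt s e hs.1 he.1 he.2)
          (tvrW_nonneg v hs.1 he.1)
    _ = ∑ s ∈ Finset.Icc 1 T, ∑ e ∈ Finset.Icc s T,
          Real.sqrt (tvrW v s e) *
          Real.sqrt (tvrW v s e * (A * ∑ τ ∈ Finset.Icc s e, z τ)) := by
        apply Finset.sum_congr rfl; intro s hs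
        apply Finset.sum_congr rfl; intro e he
        rw [Finset.mem_Icc] at hs he
        have hw := tvrW_nonneg v hs.1 he.1
        rw [Real.sqrt_mul hw, ← mul_assoc, Real.mul_self_sqrt hw]
    _ ≤ Real.sqrt (∑ s ∈ Finset.Icc 1 T, ∑ e ∈ Finset.Icc s T, tvrW v s e) *
        Real.sqrt (∑ s ∈ Finset.Icc 1 T, ∑ e ∈ Finset.Icc s T,
          tvrW v s e * (A * ∑ τ ∈ Finset.Icc s e, z τ)) := by
        rw [Finset.sum_sigma' (Finset.Icc 1 T) (fun s => Finset.Icc s T)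
            (fun s e => Real.sqrt (tvrW v s e) *
              Real.sqrt (tvrW v s e * (A * ∑ τ ∈ Finset.Icc s e, z τ))),
          Finset.sum_sigma' (Finset.Icc 1 T) (fun s => Finset.Icc s T)
            (fun s e => tvrW v s e),
          Finset.sum_sigma' (Finset.Icc 1 T) (fun s => Finset.Icc s T)
            (fun s e => tvrW v s e * (A * ∑ τ ∈ Finset.Icc s e, z τ))]
        apply tvr_cs
        · intro p hp
          rw [Finset.mem_sigma, Finset.mem_Icc, Finset.mem_Icc] at hp
          exact tvrW_nonneg v hp.1.1 hp.2.1
        · intro p hp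
          rw [Finset.mem_sigma, Finset.mem_Icc, Finset.mem_Icc] at hp
          exact mul_nonneg (tvrW_nonneg v hp.1.1 hp.2.1) (hZ _ _)
    _ = Real.sqrt (∑ t ∈ Finset.Icc 1 T, max (v t - v (t-1)) 0) *
        Real.sqrt (A * ∑ t ∈ Finset.Icc 1 T, v t * z t) := by
        rw [keyV]
        congr 2
        rw [show (∑ s ∈ Finset.Icc 1 T, ∑ e ∈ Finset.Icc s T,
            tvrW v s e * (A * ∑ τ ∈ Finset.Icc s e, z τ)) =
            A * ∑ s ∈ Finset.Icc 1 T, ∑ e ∈ Finset.Icc s T,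
              tvrW v s e * (∑ τ ∈ Finset.Icc s e, z τ) from by
          rw [Finset.mul_sum]
          apply Finset.sum_congr rfl; intro s _
          rw [Finset.mul_sum]
          apply Finset.sum_congr rfl; intro e _
          ring]
        rw [key3 z]

theorem time_varying_regret (N T : ℕ) (r z : ℕ → Fin N → ℝ) (u : ℕ → Fin N → ℝ) (A : ℝ)
    (hA : 0 ≤ A)
    (hz : ∀ t i, 0 ≤ z t i)
    (hu0 : ∀ i, u 0 i = 0)
    (hu : ∀ t i, 0 ≤ u t i)
    (hadapt : ∀ s t : ℕ, 1 ≤ s → s ≤ t → t ≤ T → ∀ i,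
      ∑ τ ∈ Finset.Icc s t, r τ i ≤ Real.sqrt (A * ∑ τ ∈ Finset.Icc s t, z τ i)) :
    ∑ t ∈ Finset.Icc 1 T, ∑ i, u t i * r t i
      ≤ Real.sqrt (A * (∑ t ∈ Finset.Icc 1 T, ∑ i, max (u t i - u (t - 1) i) 0)
          * ∑ t ∈ Finset.Icc 1 T, ∑ i, u t i * z t i) := by
  -- per-coordinate bound
  have hcoord : ∀ i : Fin N,
      ∑ t ∈ Finset.Icc 1 T, u t i * r t i ≤
        Real.sqrt (∑ t ∈ Finset.Icc 1 T, max (u t i - u (t-1) i) 0) *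
        Real.sqrt (A * ∑ t ∈ Finset.Icc 1 T, u t i * z t i) := by
    intro i
    set v : ℕ → ℝ := fun t => if t ≤ T then u t i else 0 with hvdef
    have hv : ∀ t, 0 ≤ v t := by
      intro t; simp only [hvdef]; split
      · exact hu t i
      · exact le_refl 0
    have hv0 : v 0 = 0 := by simp [hvdef, hu0 i]
    have hvT : v (T+1) = 0 := by simp [hvdef]
    have hsc := tvr_scalar T (fun t => r t i) (fun t => z t i) v A hA
      (fun t => hz t i) hv hv0 hvT
      (fun s t hs hst htT => hadapt s t hs hst htT i)
    have hvr : ∑ t ∈ Finset.Icc 1 T, v t * r t i =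
        ∑ t ∈ Finset.Icc 1 T, u t i * r t i := by
      apply Finset.sum_congr rfl; intro t ht; rw [Finset.mem_Icc] at ht
      simp [hvdef, ht.2]
    have hvz : ∑ t ∈ Finset.Icc 1 T, v t * z t i =
        ∑ t ∈ Finset.Icc 1 T, u t i * z t i := by
      apply Finset.sum_congr rfl; intro t ht; rw [Finset.mem_Icc] at ht
      simp [hvdef, ht.2]
    have hvV : ∑ t ∈ Finset.Icc 1 T, max (v t - v (t-1)) 0 =
        ∑ t ∈ Finset.Icc 1 T, max (u t i - u (t-1) i) 0 := by
      apply Finset.sum_congr rfl; intro t ht; rw [Finset.mem_Icc] at ht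
      have h1 : t ≤ T := ht.2
      have h2 : t - 1 ≤ T := by omega
      simp [hvdef, h1, h2]
    rw [hvr, hvz, hvV] at hsc
    exact hsc
  -- sum over coordinates
  have hswap : ∑ t ∈ Finset.Icc 1 T, ∑ i, u t i * r t i =
      ∑ i, ∑ t ∈ Finset.Icc 1 T, u t i * r t i := Finset.sum_comm
  rw [hswap]
  have hVnn : ∀ i : Fin N, (0:ℝ) ≤ ∑ t ∈ Finset.Icc 1 T, max (u t i - u (t-1) i) 0 :=
    fun i => Finset.sum_nonneg fun t _ => le_max_right _ _
  have hZnn : ∀ i : Fin N, (0:ℝ) ≤ A * ∑ t ∈ Finset.Icc 1 T, u t i * z t i :=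
    fun i => mul_nonneg hA (Finset.sum_nonneg fun t _ => mul_nonneg (hu t i) (hz t i))
  calc ∑ i, ∑ t ∈ Finset.Icc 1 T, u t i * r t i
      ≤ ∑ i : Fin N, Real.sqrt (∑ t ∈ Finset.Icc 1 T, max (u t i - u (t-1) i) 0) *
          Real.sqrt (A * ∑ t ∈ Finset.Icc 1 T, u t i * z t i) :=
        Finset.sum_le_sum fun i _ => hcoord i
    _ ≤ Real.sqrt (∑ i : Fin N, ∑ t ∈ Finset.Icc 1 T, max (u t i - u (t-1) i) 0) *
        Real.sqrt (∑ i : Fin N, A * ∑ t ∈ Finset.Icc 1 T, u t i * z t i) :=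
        tvr_cs Finset.univ _ _ (fun i _ => hVnn i) (fun i _ => hZnn i)
    _ = Real.sqrt (A * (∑ t ∈ Finset.Icc 1 T, ∑ i, max (u t i - u (t - 1) i) 0)
          * ∑ t ∈ Finset.Icc 1 T, ∑ i, u t i * z t i) := by
        rw [show (∑ i : Fin N, ∑ t ∈ Finset.Icc 1 T, max (u t i - u (t-1) i) 0) =
            ∑ t ∈ Finset.Icc 1 T, ∑ i, max (u t i - u (t - 1) i) 0 from Finset.sum_comm]
        rw [← Finset.mul_sum]
        rw [show (∑ i : Fin N, ∑ t ∈ Finset.Icc 1 T, u t i * z t i) =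
            ∑ t ∈ Finset.Icc 1 T, ∑ i, u t i * z t i from Finset.sum_comm]
        rw [← Real.sqrt_mul (Finset.sum_nonneg fun t _ =>
          Finset.sum_nonneg fun i _ => le_max_right _ _)]
        ring_nf
end
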